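/- arXiv:1210.0833 — 2 statements merged into one kernel-verified Lean document; each statement's English description precedes it below -/
import Mathlib

section
/- Let X and Y be topological spaces with X Baire, and let f : X → Y be a continuous map such that the image under f of every nonempty open subset of X is somewhere dense in Y. Then the image under f of every non-meager subset of X is non-meager in Y; equivalently, the preimage under f of every meager subset of Y is meager in X, and the preimage under f of every comeager subset of Y is comeager in X. -/
open Topology Set Filter

section

variable {X Y : Type*} [TopologicalSpace X] [TopologicalSpace Y] {f : X → Y}

/-- A dense open set meets the somewhere dense set `f '' U` because it meets the open set
`interior (closure (f '' U))`. -/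
theorem Dense.preimage_of_image_somewhereDense
    (hsd : ∀ U : Set X, IsOpen U → U.Nonempty → (interior (closure (f '' U))).Nonempty)
    {t : Set Y} (htd : Dense t) (hto : IsOpen t) : Dense (f ⁻¹' t) := by
  refine dense_iff_inter_open.2 fun U hUo hU => ?_
  obtain ⟨y, hyV, hyt⟩ := htd.inter_open_nonempty _ isOpen_interior (hsd U hUo hU)
  obtain ⟨_, ⟨x, hxU, rfl⟩, hxt⟩ :=
    (closure_inter_open_nonempty_iff hto).1 ⟨y, interior_subset hyV, hyt⟩
  exact ⟨x, hxU, hxt⟩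

theorem tendsto_residual_of_image_somewhereDense (hf : Continuous f)
    (hsd : ∀ U : Set X, IsOpen U → U.Nonempty → (interior (closure (f '' U))).Nonempty) :
    Tendsto f (residual X) (residual Y) := by
  refine le_countableGenerate_iff_of_countableInterFilter.2 fun t ⟨hto, htd⟩ => ?_
  exact residual_of_dense_open (hto.preimage hf) (htd.preimage_of_image_somewhereDense hsd hto)

end

theorem image_nonmeager_of_open_somewhere_dense_general {X Y : Type*} [TopologicalSpace X]
    [TopologicalSpace Y] (f : X → Y) (hf : Continuous f)
    (hsd : ∀ U : Set X, IsOpen U → U.Nonempty → (interior (closure (f '' U))).Nonempty) :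
    (∀ A : Set X, ¬ IsMeagre A → ¬ IsMeagre (f '' A)) ∧
    (∀ B : Set Y, IsMeagre B → IsMeagre (f ⁻¹' B)) ∧
    (∀ B : Set Y, B ∈ residual Y → f ⁻¹' B ∈ residual X) := by
  have hres := tendsto_residual_of_image_somewhereDense hf hsd
  have preimage_meagre : ∀ B : Set Y, IsMeagre B → IsMeagre (f ⁻¹' B) := fun _ hB => hres hB
  exact ⟨fun A hA hfA => hA ((preimage_meagre _ hfA).mono (subset_preimage_image f A)),
    preimage_meagre, fun _ hB => hres hB⟩

/-- If `f : X → Y` is continuous, `X` is Baire, and images of nonempty open sets are somewhere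
dense, then images of non-meager sets are non-meager; equivalently preimages of meager sets are
meager and preimages of comeager sets are comeager. -/
theorem image_nonmeager_of_open_somewhere_dense {X Y : Type*} [TopologicalSpace X]
    [TopologicalSpace Y] [BaireSpace X] (f : X → Y) (hf : Continuous f)
    (hsd : ∀ U : Set X, IsOpen U → U.Nonempty → (interior (closure (f '' U))).Nonempty) :
    (∀ A : Set X, ¬ IsMeagre A → ¬ IsMeagre (f '' A)) ∧
    (∀ B : Set Y, IsMeagre B → IsMeagre (f ⁻¹' B)) ∧
    (∀ B : Set Y, B ∈ residual Y → f ⁻¹' B ∈ residual X) :=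
  image_nonmeager_of_open_somewhere_dense_general f hf hsd
end

section
/- Let G be a Polish group and let H be a closed abelian subgroup of G. Then the set L_H of all one-parameter subgroups X of G with image(X) ⊆ H is a closed subset of the space 𝓛(G) of one-parameter subgroups of G, and L_H, with addition (X + Y)(t) = X(t)Y(t) and scalar multiplication (rX)(t) = X(rt) for r ∈ ℝ, is a separable F-space, i.e. a topological vector space over ℝ whose topology is induced by a complete metric and is separable. -/
noncomputable section

open Topology Set

/-- The space `𝓛(G)` of one-parameter subgroups of `G`, i.e. continuous homomorphisms
`ℝ → G`, as a subspace of `C(ℝ, G)` with the compact-open topology. -/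
def OneParam (G : Type*) [TopologicalSpace G] [Group G] : Set C(ℝ, G) :=
  {X | ∀ s t : ℝ, X (s + t) = X s * X t}

/-- The scalar action of `ℝ` on `𝓛(G)`: `(rX)(t) = X(rt)`. -/
def oneParamSMul (G : Type*) [TopologicalSpace G] [Group G] (r : ℝ) (X : OneParam G) :
    OneParam G :=
  ⟨X.1.comp ⟨fun t => r * t, by fun_prop⟩, fun s t => by
    simp only [ContinuousMap.comp_apply, ContinuousMap.coe_mk]
    rw [mul_add]
    exact X.2 _ _⟩

/-- The evaluation map `e : 𝓛(G) → G`, `e(X) = X(1)`. -/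
def oneParamEval (G : Type*) [TopologicalSpace G] [Group G] (X : OneParam G) : G := X.1 1


/-- The set of one-parameter subgroups of `G` with image in a fixed closed abelian subgroup
`H`. -/
def LH (G : Type*) [TopologicalSpace G] [Group G] (H : Subgroup G) : Set (OneParam G) :=
  {X | ∀ t : ℝ, (X : C(ℝ, G)) t ∈ H}

/-! The evaluations `X ↦ X t` are continuous on `C(ℝ, G)`, so `𝓛(G)` and `L_H` are cut out by
closed conditions; being closed in the Polish space `C(ℝ, G)`, `L_H` is Polish. Commutativity of
`H` is exactly what makes the pointwise product of two one-parameter subgroups with values in `H`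
again a homomorphism, and the vector space laws then hold pointwise. -/

section OneParam

variable {G : Type*} [TopologicalSpace G] [Group G]

theorem isClosed_oneParam [T2Space G] [ContinuousMul G] : IsClosed (OneParam G) := by
  simp only [OneParam, ofPred_forall]
  exact isClosed_iInter fun s => isClosed_iInter fun t =>
    isClosed_eq (continuous_eval_const _)
      ((continuous_eval_const s).mul (continuous_eval_const t))

theorem polishSpace_oneParam [PolishSpace G] [ContinuousMul G] : PolishSpace (OneParam G) :=
  let _ := TopologicalSpace.upgradeIsCompletelyMetrizable G
  isClosed_oneParam.polishSpace

theorem continuous_oneParamSMul :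
    Continuous fun p : ℝ × OneParam G => oneParamSMul G p.1 p.2 := by
  have hmul : Continuous fun r : ℝ => (⟨fun t => r * t, by fun_prop⟩ : C(ℝ, ℝ)) :=
    (ContinuousMap.curry ⟨fun p : ℝ × ℝ => p.1 * p.2, continuous_mul⟩).continuous
  exact (ContinuousMap.continuous_comp'.comp
    ((hmul.comp continuous_fst).prodMk (continuous_subtype_val.comp continuous_snd))).subtype_mk _

end OneParam

section LH

variable {G : Type*} [TopologicalSpace G] [Group G] {H : Subgroup G}

theorem isClosed_LH (hH : IsClosed (H : Set G)) : IsClosed (LH G H) := by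
  simp only [LH, ofPred_forall]
  exact isClosed_iInter fun t => hH.preimage ((continuous_eval_const t).comp continuous_subtype_val)

namespace LH

@[ext]
theorem ext {X Y : LH G H} (h : ∀ t : ℝ, X.1.1 t = Y.1.1 t) : X = Y :=
  Subtype.ext (Subtype.ext (ContinuousMap.ext h))

def add [ContinuousMul G] (hH : ∀ x ∈ H, ∀ y ∈ H, x * y = y * x) (X Y : LH G H) : LH G H :=
  ⟨⟨X.1.1 * Y.1.1, fun s t => by
      simp only [ContinuousMap.mul_apply, X.1.2 s t, Y.1.2 s t]
      rw [mul_assoc, mul_assoc, ← mul_assoc (X.1.1 t), hH _ (X.2 t) _ (Y.2 s), mul_assoc]⟩,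
    fun t => H.mul_mem (X.2 t) (Y.2 t)⟩

def neg [ContinuousInv G] (hH : ∀ x ∈ H, ∀ y ∈ H, x * y = y * x) (X : LH G H) : LH G H :=
  ⟨⟨(X.1.1)⁻¹, fun s t => by
      simp only [ContinuousMap.inv_apply, X.1.2 s t, mul_inv_rev]
      exact hH _ (H.inv_mem (X.2 t)) _ (H.inv_mem (X.2 s))⟩,
    fun t => H.inv_mem (X.2 t)⟩

def zero : LH G H := ⟨⟨1, fun _ _ => (one_mul 1).symm⟩, fun _ => H.one_mem⟩

def smul (r : ℝ) (X : LH G H) : LH G H :=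
  ⟨oneParamSMul G r X.1, fun t => X.2 (r * t)⟩

section Add

variable [ContinuousMul G] (hH : ∀ x ∈ H, ∀ y ∈ H, x * y = y * x)

theorem add_assoc (X Y Z : LH G H) : add hH (add hH X Y) Z = add hH X (add hH Y Z) :=
  ext fun _ => mul_assoc _ _ _

theorem add_comm (X Y : LH G H) : add hH X Y = add hH Y X :=
  ext fun t => hH _ (X.2 t) _ (Y.2 t)

theorem zero_add (X : LH G H) : add hH zero X = X :=
  ext fun _ => one_mul _

theorem neg_add_cancel [ContinuousInv G] (X : LH G H) : add hH (neg hH X) X = zero :=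
  ext fun _ => inv_mul_cancel _

theorem smul_add (r : ℝ) (X Y : LH G H) : smul r (add hH X Y) = add hH (smul r X) (smul r Y) :=
  rfl

theorem add_smul (r s : ℝ) (X : LH G H) : smul (r + s) X = add hH (smul r X) (smul s X) :=
  ext fun t => by
    change X.1.1 ((r + s) * t) = X.1.1 (r * t) * X.1.1 (s * t)
    rw [_root_.add_mul]
    exact X.1.2 _ _

theorem continuous_add : Continuous fun p : LH G H × LH G H => add hH p.1 p.2 := by
  have hval : Continuous fun X : LH G H => X.1.1 :=
    continuous_subtype_val.comp continuous_subtype_val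
  exact (((hval.comp continuous_fst).mul (hval.comp continuous_snd)).subtype_mk _).subtype_mk _

end Add

theorem mul_smul (r s : ℝ) (X : LH G H) : smul (r * s) X = smul r (smul s X) :=
  ext fun t => congrArg X.1.1 (by ring : r * s * t = s * (r * t))

theorem one_smul (X : LH G H) : smul 1 X = X :=
  ext fun t => congrArg X.1.1 (_root_.one_mul t)

theorem continuous_smul : Continuous fun p : ℝ × LH G H => smul p.1 p.2 :=
  (continuous_oneParamSMul.comp (continuous_fst.prodMk
    (continuous_subtype_val.comp continuous_snd))).subtype_mk _

end LH

end LH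

/-- For a Polish group `G` and a closed abelian subgroup `H ≤ G`, the set `L_H` of
one-parameter subgroups with image in `H` is closed in `𝓛(G)`, and, under pointwise
product as addition and `(rX)(t) = X(rt)` as scalar multiplication, it is a separable
F-space (i.e. a Polish topological vector space over `ℝ`). -/
theorem LH_closed_and_separable_Fspace (G : Type*) [TopologicalSpace G] [Group G]
    [IsTopologicalGroup G] [PolishSpace G] (H : Subgroup G) (hHcl : IsClosed (H : Set G))
    (hHab : ∀ x ∈ H, ∀ y ∈ H, x * y = y * x) :
    IsClosed (LH G H) ∧
    ∃ (add : LH G H → LH G H → LH G H) (zero : LH G H) (neg : LH G H → LH G H)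
      (smul : ℝ → LH G H → LH G H),
      (∀ (X Y : LH G H) (t : ℝ), (add X Y).1.1 t = X.1.1 t * Y.1.1 t) ∧
      (∀ (r : ℝ) (X : LH G H) (t : ℝ), (smul r X).1.1 t = X.1.1 (r * t)) ∧
      (∀ X Y Z : LH G H, add (add X Y) Z = add X (add Y Z)) ∧
      (∀ X Y : LH G H, add X Y = add Y X) ∧
      (∀ X : LH G H, add zero X = X) ∧
      (∀ X : LH G H, add (neg X) X = zero) ∧
      (∀ (r : ℝ) (X Y : LH G H), smul r (add X Y) = add (smul r X) (smul r Y)) ∧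
      (∀ (r s : ℝ) (X : LH G H), smul (r + s) X = add (smul r X) (smul s X)) ∧
      (∀ (r s : ℝ) (X : LH G H), smul (r * s) X = smul r (smul s X)) ∧
      (∀ X : LH G H, smul 1 X = X) ∧
      Continuous (fun p : LH G H × LH G H => add p.1 p.2) ∧
      Continuous (fun p : ℝ × LH G H => smul p.1 p.2) ∧
      PolishSpace (LH G H) := by
  have hclosed := isClosed_LH hHcl
  have : PolishSpace (OneParam G) := polishSpace_oneParam
  exact ⟨hclosed, LH.add hHab, LH.zero, LH.neg hHab, LH.smul, fun _ _ _ => rfl,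
    fun _ _ _ => rfl, LH.add_assoc hHab, LH.add_comm hHab, LH.zero_add hHab, LH.neg_add_cancel hHab,
    LH.smul_add hHab, LH.add_smul hHab, LH.mul_smul, LH.one_smul, LH.continuous_add hHab,
    LH.continuous_smul, hclosed.polishSpace⟩

end
end
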